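/- arXiv:2004.04841 — 3 statements merged into one kernel-verified Lean document; each statement's English description precedes it below -/
import Mathlib

section
/- Let F ⊆ 2^X have VC-dimension at most t, and let F^∩k denote the family of all intersections of at most k members of F. If a set A of size m is shattered by F^∩k, then 2^m ≤ (Σ_{i≤t} C(m,i))^k; consequently the VC-dimension of F^∩k is at most C·t·k·log₂(k+1) for an absolute constant C (e.g., C = 4 suffices for t,k ≥ 1). -/
open Finset

/-- A set `Y` (given as a finset) is shattered by the family `F`. -/
def ShatteredBy {X : Type*} (F : Set (Set X)) (Y : Finset X) : Prop :=
  ∀ B : Finset X, B ⊆ Y → ∃ S ∈ F, S ∩ (Y : Set X) = (B : Set X)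

/-- The family of intersections of at most `k` members of `F`. -/
def InterClosure {X : Type*} (F : Set (Set X)) (k : ℕ) : Set (Set X) :=
  {S | ∃ G : Finset (Set X), (G : Set (Set X)) ⊆ F ∧ G.Nonempty ∧ G.card ≤ k ∧
    S = ⋂₀ (G : Set (Set X))}

/-! If `F^∩k` shatters `A`, each `B ⊆ A` is `A ∩ S₁ ∩ ⋯ ∩ Sₖ` for some `Sᵢ ∈ F` (repeating members
when fewer than `k` are needed), so `B` is determined by the `k`-tuple of traces `Sᵢ ∩ A`. By the
Sauer–Shelah lemma `F` has at most `∑_{i ≤ t} C(m,i)` traces on `A`, whence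
`2^m ≤ (∑_{i ≤ t} C(m,i))^k`.
Bounding that sum by `(e m / t)^t` gives `m log 2 ≤ k t (1 + log (m / t))`, i.e.
`y log 2 - log y ≤ 1 + log k` for `y = m / (k t)`. The left side increases for `y ≥ 2`, and at
`y = 4 log₂ (k + 1)` it already exceeds `1 + log k`. -/

open Real

theorem Finset.card_le_sum_choose_of_shatters {α : Type*} [DecidableEq α] {𝒜 : Finset (Finset α)}
    {A : Finset α} {t : ℕ} (h𝒜 : ∀ B ∈ 𝒜, B ⊆ A) (ht : ∀ s, 𝒜.Shatters s → #s ≤ t) :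
    #𝒜 ≤ ∑ i ∈ range (t + 1), (#A).choose i :=
  calc #𝒜 ≤ #𝒜.shatterer := card_le_card_shatterer 𝒜
    _ ≤ #((range (t + 1)).biUnion fun i ↦ A.powersetCard i) := by
      refine card_le_card fun s hs ↦ ?_
      obtain ⟨u, hu, hsu⟩ := (mem_shatterer.1 hs).exists_superset
      simp only [mem_biUnion, mem_range, mem_powersetCard]
      exact ⟨#s, Nat.lt_succ_of_le (ht s (mem_shatterer.1 hs)), hsu.trans (h𝒜 u hu), rfl⟩
    _ ≤ ∑ i ∈ range (t + 1), #(A.powersetCard i) := card_biUnion_le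
    _ = ∑ i ∈ range (t + 1), (#A).choose i := by simp only [card_powersetCard]

theorem Finset.exists_fin_range_eq {α : Type*} {s : Finset α} {k : ℕ} (hs : s.Nonempty)
    (hk : #s ≤ k) : ∃ g : Fin k → α, Set.range g = s := by
  have : Nonempty s := hs.to_subtype
  obtain ⟨g, hg⟩ := Function.exists_surjective_iff.2
    ⟨inferInstance, Function.Embedding.nonempty_of_card_le (α := s) (β := Fin k)
      (by simpa using hk)⟩
  exact ⟨Subtype.val ∘ g, by rw [Set.range_comp, hg.range_eq, Set.image_univ, Subtype.range_coe]⟩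

theorem two_pow_card_le_card_pow_of_forall_eq_filter {α : Type*} [DecidableEq α]
    {𝒯 : Finset (Finset α)} {A : Finset α} {k : ℕ}
    (h : ∀ B ⊆ A, ∃ f : Fin k → Finset α, (∀ i, f i ∈ 𝒯) ∧ B = A.filter fun a ↦ ∀ i, a ∈ f i) :
    2 ^ #A ≤ #𝒯 ^ k := by
  have hsub : A.powerset ⊆ (Fintype.piFinset fun _ : Fin k ↦ 𝒯).image
      fun f ↦ A.filter fun a ↦ ∀ i, a ∈ f i := by
    intro B hB
    obtain ⟨f, hf𝒯, rfl⟩ := h B (mem_powerset.1 hB)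
    exact mem_image.2 ⟨f, Fintype.mem_piFinset.2 hf𝒯, rfl⟩
  simpa using (card_le_card hsub).trans card_image_le

theorem pow_mul_sum_choose_le_one_add_pow {m t : ℕ} (htm : t ≤ m) {x : ℝ} (hx₀ : 0 ≤ x)
    (hx₁ : x ≤ 1) : x ^ t * ∑ i ∈ range (t + 1), (m.choose i : ℝ) ≤ (1 + x) ^ m :=
  calc x ^ t * ∑ i ∈ range (t + 1), (m.choose i : ℝ)
      ≤ ∑ i ∈ range (t + 1), x ^ i * (m.choose i : ℝ) := by
        rw [mul_sum]
        exact sum_le_sum fun i hi ↦ mul_le_mul_of_nonneg_right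
          (pow_le_pow_of_le_one hx₀ hx₁ (mem_range_succ_iff.1 hi)) (by positivity)
    _ ≤ ∑ i ∈ range (m + 1), x ^ i * (m.choose i : ℝ) :=
        sum_le_sum_of_subset_of_nonneg (range_subset_range.2 (by omega)) fun _ _ _ ↦ by positivity
    _ = (1 + x) ^ m := by simp [add_comm 1 x, add_pow]

theorem log_sum_choose_le {m t : ℕ} (htm : t ≤ m) :
    log (∑ i ∈ range (t + 1), (m.choose i : ℝ)) ≤ t * (1 + log (m / t)) := by
  rcases t.eq_zero_or_pos with rfl | ht
  · simp
  have hm : (0 : ℝ) < m := by exact_mod_cast ht.trans_le htm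
  have hS : 0 < ∑ i ∈ range (t + 1), (m.choose i : ℝ) :=
    sum_pos' (fun _ _ ↦ by positivity) ⟨0, by simp⟩
  set x : ℝ := t / m with hx
  have hx₀ : 0 < x := by positivity
  have hbound : x ^ t * ∑ i ∈ range (t + 1), (m.choose i : ℝ) ≤ exp t :=
    calc x ^ t * ∑ i ∈ range (t + 1), (m.choose i : ℝ) ≤ (1 + x) ^ m :=
          pow_mul_sum_choose_le_one_add_pow htm hx₀.le
            (div_le_one_of_le₀ (by exact_mod_cast htm) hm.le)
      _ ≤ exp x ^ m := by gcongr; linarith [add_one_le_exp x]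
      _ = exp t := by rw [← exp_nat_mul, hx, mul_div_cancel₀ _ hm.ne']
  have hlog := log_le_log (by positivity) hbound
  rw [log_mul (by positivity) hS.ne', log_pow, log_exp, hx, log_div (by positivity) hm.ne'] at hlog
  rw [log_div hm.ne' (by positivity)]
  linarith

theorem mul_log_two_sub_log_lt {y₀ y : ℝ} (hy₀ : 2 ≤ y₀) (hy : y₀ < y) :
    y₀ * log 2 - log y₀ < y * log 2 - log y := by
  have hy₀' : 0 < y₀ := by linarith
  have hlog : log y - log y₀ ≤ (y - y₀) / y₀ := by
    rw [← log_div (by linarith) hy₀'.ne', sub_div, div_self hy₀'.ne']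
    exact log_le_sub_one_of_pos (div_pos (by linarith) hy₀')
  have hdiv : (y - y₀) / y₀ ≤ (y - y₀) / 2 := div_le_div_of_nonneg_left (by linarith) two_pos hy₀
  have hlog2 : (y - y₀) / 2 < (y - y₀) * log 2 := by
    rw [div_eq_mul_one_div]
    exact mul_lt_mul_of_pos_left (by linarith [log_two_gt_d9]) (by linarith)
  linarith

theorem one_le_logb_two_add_one {k : ℕ} (hk : 1 ≤ k) : 1 ≤ logb 2 (k + 1) := by
  rw [le_logb_iff_rpow_le one_lt_two (by positivity), rpow_one]
  exact_mod_cast Nat.succ_le_succ hk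

theorem one_add_log_add_log_four_mul_logb_le {k : ℕ} (hk : 1 ≤ k) :
    1 + log k + log (4 * logb 2 (k + 1)) ≤ 4 * log (k + 1) := by
  have hlog2 : 0.6931471803 < log 2 := log_two_gt_d9
  rcases hk.eq_or_lt with rfl | hk
  · have h4 : log 4 = 2 * log 2 := by
      rw [show (4 : ℝ) = 2 ^ 2 by norm_num, log_pow, Nat.cast_ofNat]
    norm_num [h4]
    linarith
  set u := log (k + 1)
  have hk₃ : (3 : ℝ) ≤ k + 1 := by exact_mod_cast Nat.succ_le_succ hk
  have hu : log 3 ≤ u := log_le_log (by norm_num) hk₃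
  have hlog3 : 1 ≤ log 3 := by
    rw [le_log_iff_exp_le (by norm_num)]
    linarith [exp_one_lt_d9]
  have hlogk : log k ≤ u := log_le_log (by positivity) (by linarith)
  have hlogu : log u ≤ u - 1 := log_le_sub_one_of_pos (by linarith)
  have hconst : log (4 / log 2) ≤ 2 * u :=
    calc log (4 / log 2) ≤ log (3 ^ 2) := log_le_log (by positivity) (by
          rw [div_le_iff₀ (by linarith)]; norm_num; linarith)
      _ = 2 * log 3 := by rw [log_pow, Nat.cast_ofNat]
      _ ≤ 2 * u := by linarith
  have hsplit : log (4 * logb 2 (k + 1)) = log (4 / log 2) + log u := by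
    rw [show 4 * logb 2 (k + 1) = 4 / log 2 * u by rw [logb]; ring,
      log_mul (by positivity) (by linarith)]
  linarith

theorem le_four_mul_logb_of_mul_log_two_le {t m : ℝ} {k : ℕ} (ht : 0 ≤ t) (hk : 1 ≤ k)
    (h : m * log 2 ≤ k * t * (1 + log (m / t))) : m ≤ 4 * t * k * logb 2 (k + 1) := by
  have hL := one_le_logb_two_add_one hk
  have hlog2 : 0 < log 2 := log_pos one_lt_two
  have hk₀ : (0 : ℝ) < k := by exact_mod_cast hk
  rcases ht.eq_or_lt with rfl | ht
  · simp only [mul_zero, zero_mul] at h ⊢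
    nlinarith
  by_contra! hlt
  have hkt : 0 < k * t := by positivity
  set y := m / (k * t) with hy_def
  have hy : 4 * logb 2 (k + 1) < y := by rw [lt_div_iff₀ hkt]; linarith
  have hy_pos : 0 < y := by linarith
  have hm_eq : m = k * t * y := by rw [hy_def, mul_div_cancel₀ _ hkt.ne']
  have h' : y * log 2 - log y ≤ 1 + log k := by
    have hmt : m / t = k * y := by rw [hm_eq]; field_simp
    rw [hmt, log_mul hk₀.ne' hy_pos.ne', hm_eq] at h
    have := le_of_mul_le_mul_left (a := k * t) (b := y * log 2) (c := 1 + log k + log y)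
      (by linarith) hkt
    linarith
  have h₀ : 1 + log k ≤ 4 * logb 2 (k + 1) * log 2 - log (4 * logb 2 (k + 1)) := by
    have hlogb : logb 2 (k + 1) * log 2 = log (k + 1) := div_mul_cancel₀ _ hlog2.ne'
    rw [mul_assoc, hlogb]
    linarith [one_add_log_add_log_four_mul_logb_le hk]
  linarith [mul_log_two_sub_log_lt (by linarith) hy]

section

variable {X : Type*} {F : Set (Set X)} {A B s : Finset X} {k t : ℕ}

open Classical in
noncomputable def traceOn (F : Set (Set X)) (A : Finset X) : Finset (Finset X) :=
  A.powerset.filter fun B ↦ ∃ S ∈ F, S ∩ ↑A = ↑B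

theorem mem_traceOn : B ∈ traceOn F A ↔ B ⊆ A ∧ ∃ S ∈ F, S ∩ ↑A = ↑B := by
  simp [traceOn]

theorem ShatteredBy.of_shatters_traceOn [DecidableEq X] (h : (traceOn F A).Shatters s) :
    ShatteredBy F s := by
  obtain ⟨u, hu, hsu⟩ := h.exists_superset
  have hsA : s ⊆ A := hsu.trans (mem_traceOn.1 hu).1
  intro B hB
  obtain ⟨u, hu, rfl⟩ := h hB
  obtain ⟨-, S, hSF, hSu⟩ := mem_traceOn.1 hu
  refine ⟨S, hSF, ?_⟩
  rw [coe_inter, ← hSu, ← Set.inter_assoc, Set.inter_comm ↑s S, Set.inter_assoc,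
    Set.inter_eq_left.2 (coe_subset.2 hsA)]

theorem card_traceOn_le [DecidableEq X] (hVC : ∀ Y : Finset X, ShatteredBy F Y → #Y ≤ t) :
    #(traceOn F A) ≤ ∑ i ∈ range (t + 1), (#A).choose i :=
  card_le_sum_choose_of_shatters (fun _ hB ↦ (mem_traceOn.1 hB).1)
    fun _ hs ↦ hVC _ (.of_shatters_traceOn hs)

theorem ShatteredBy.exists_eq_filter_traceOn [DecidableEq X]
    (h : ShatteredBy (InterClosure F k) A) (hB : B ⊆ A) :
    ∃ f : Fin k → Finset X, (∀ i, f i ∈ traceOn F A) ∧ B = A.filter fun a ↦ ∀ i, a ∈ f i := by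
  classical
  obtain ⟨_, ⟨G, hGF, hGne, hGk, rfl⟩, hGB⟩ := h B hB
  obtain ⟨g, hg⟩ := exists_fin_range_eq hGne hGk
  have hgF : ∀ i, g i ∈ F := fun i ↦ hGF (hg ▸ Set.mem_range_self i)
  refine ⟨fun i ↦ A.filter (· ∈ g i), fun i ↦ mem_traceOn.2 ⟨filter_subset _ _, g i, hgF i, ?_⟩, ?_⟩
  · ext; simp [and_comm]
  · rw [← hg, Set.sInter_range] at hGB
    ext a
    rw [← mem_coe, ← hGB]
    simp +contextual [and_comm]

theorem ShatteredBy.one_le_of_interClosure (h : ShatteredBy (InterClosure F k) A) : 1 ≤ k := by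
  obtain ⟨_, ⟨G, -, hGne, hGk, -⟩, -⟩ := h ∅ (empty_subset A)
  exact hGne.card_pos.trans_le hGk

theorem ShatteredBy.two_pow_card_le (hVC : ∀ Y : Finset X, ShatteredBy F Y → #Y ≤ t)
    (h : ShatteredBy (InterClosure F k) A) :
    2 ^ #A ≤ (∑ i ∈ range (t + 1), (#A).choose i) ^ k := by
  classical
  calc 2 ^ #A ≤ #(traceOn F A) ^ k :=
        two_pow_card_le_card_pow_of_forall_eq_filter fun _ hB ↦ h.exists_eq_filter_traceOn hB
    _ ≤ (∑ i ∈ range (t + 1), (#A).choose i) ^ k := Nat.pow_le_pow_left (card_traceOn_le hVC) k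

theorem ShatteredBy.card_le_four_mul_logb (hVC : ∀ Y : Finset X, ShatteredBy F Y → #Y ≤ t)
    (h : ShatteredBy (InterClosure F k) A) : (#A : ℝ) ≤ 4 * t * k * logb 2 (k + 1) := by
  have hk := h.one_le_of_interClosure
  rcases le_or_gt #A t with hAt | htA
  · have : (1 : ℝ) ≤ 4 * k * logb 2 (k + 1) := by
      have : (1 : ℝ) ≤ k := by exact_mod_cast hk
      nlinarith [one_le_logb_two_add_one hk]
    calc (#A : ℝ) ≤ t := by exact_mod_cast hAt
      _ ≤ 4 * t * k * logb 2 (k + 1) := by nlinarith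
  refine le_four_mul_logb_of_mul_log_two_le t.cast_nonneg hk ?_
  calc (#A : ℝ) * log 2 = log ((2 : ℝ) ^ #A) := by rw [log_pow]
    _ ≤ log ((∑ i ∈ range (t + 1), ((#A).choose i : ℝ)) ^ k) :=
        log_le_log (by positivity) (by exact_mod_cast h.two_pow_card_le hVC)
    _ = k * log (∑ i ∈ range (t + 1), ((#A).choose i : ℝ)) := log_pow _ _
    _ ≤ k * (t * (1 + log (#A / t))) := by gcongr; exact log_sum_choose_le htA.le
    _ = k * t * (1 + log (#A / t)) := by ring

end

theorem behw_intersection_bound_general {X : Type*} (F : Set (Set X)) (t k : ℕ)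
    (hVC : ∀ Y : Finset X, ShatteredBy F Y → Y.card ≤ t) :
    (∀ (A : Finset X) (m : ℕ), A.card = m → ShatteredBy (InterClosure F k) A →
      2 ^ m ≤ (∑ i ∈ Finset.range (t + 1), m.choose i) ^ k) ∧
    (∀ A : Finset X, ShatteredBy (InterClosure F k) A →
      (A.card : ℝ) ≤ 4 * t * k * Real.logb 2 (k + 1)) :=
  ⟨fun _ _ hA h ↦ hA ▸ h.two_pow_card_le hVC, fun _ h ↦ h.card_le_four_mul_logb hVC⟩

/-- Blumer–Ehrenfeucht–Haussler–Warmuth: if `F` has VC-dimension at most `t`, then any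
set of size `m` shattered by `F^∩k` satisfies `2^m ≤ (∑_{i ≤ t} C(m,i))^k`, and
consequently the VC-dimension of `F^∩k` is at most `4·t·k·log₂(k+1)`. -/
theorem behw_intersection_bound {X : Type*} (F : Set (Set X)) (t k : ℕ)
    (ht : 1 ≤ t) (hk : 1 ≤ k)
    (hVC : ∀ Y : Finset X, ShatteredBy F Y → Y.card ≤ t) :
    (∀ (A : Finset X) (m : ℕ), A.card = m → ShatteredBy (InterClosure F k) A →
      2 ^ m ≤ (∑ i ∈ Finset.range (t + 1), m.choose i) ^ k) ∧
    (∀ A : Finset X, ShatteredBy (InterClosure F k) A →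
      (A.card : ℝ) ≤ 4 * t * k * Real.logb 2 (k + 1)) :=
  behw_intersection_bound_general F t k hVC
end

section
/- Sauer–Shelah lemma: if F ⊆ 2^A with |A| = m and F shatters no subset of size t + 1, then |F| ≤ Σ_{i=0}^{t} C(m, i). -/
/-- Sauer–Shelah lemma: if `F ⊆ 2^A`, `|A| = m`, and `F` shatters no subset of `A` of
size `t + 1`, then `|F| ≤ ∑_{i=0}^{t} C(m,i)`. -/
theorem sauer_shelah {X : Type*} [DecidableEq X] (A : Finset X) (m t : ℕ)
    (hA : A.card = m) (F : Finset (Finset X)) (hF : ∀ S ∈ F, S ⊆ A)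
    (hns : ∀ Y : Finset X, Y ⊆ A →
      (∀ B : Finset X, B ⊆ Y → ∃ S ∈ F, S ∩ Y = B) → Y.card ≤ t) :
    F.card ≤ ∑ i ∈ Finset.range (t + 1), m.choose i := by
  have h1 : F.card ≤ F.shatterer.card := Finset.card_le_card_shatterer F
  have h2 : F.shatterer ⊆ (Finset.Iic t).biUnion fun k => A.powersetCard k := by
    intro s hs
    rw [Finset.mem_shatterer] at hs
    obtain ⟨u, hu, hsu⟩ := hs.exists_superset
    have hsA : s ⊆ A := hsu.trans (hF u hu)
    have hcard : s.card ≤ t := by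
      refine hns s hsA fun B hB => ?_
      obtain ⟨v, hv, hvv⟩ := hs hB
      exact ⟨v, hv, by rwa [Finset.inter_comm]⟩
    exact Finset.mem_biUnion.2 ⟨s.card, Finset.mem_Iic.2 hcard,
      Finset.mem_powersetCard.2 ⟨hsA, rfl⟩⟩
  calc F.card ≤ _ := h1
    _ ≤ _ := Finset.card_le_card h2
    _ ≤ ∑ k ∈ Finset.Iic t, (A.powersetCard k).card := Finset.card_biUnion_le
    _ = ∑ i ∈ Finset.range (t + 1), m.choose i := by
        rw [show Finset.Iic t = Finset.range (t+1) from by ext x; simp [Nat.lt_succ_iff]]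
        exact Finset.sum_congr rfl fun k _ => by rw [Finset.card_powersetCard, hA]
end

section
/- For integers d ≥ 2 and k ≥ 2d, the VC-dimension of the family of polytopes with at most k vertices in ℝ^d is at least d·k/3. -/
/-- The class of convex hulls of (at most) `k` points in `ℝ^d`. -/
def KVertexPolytopes (d k : ℕ) : Set (Set (Fin d → ℝ)) :=
  {S | ∃ y : Fin k → (Fin d → ℝ), S = convexHull ℝ (Set.range y)}

/-!
Write `d = D + 1` and `k = m + D`, and let `e_j` (`j < D`) be the coordinate vectors of `ℝ^d`
beyond the first. The shattered set consists of the `m·D` points `c_i - e_j`, where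
`c_i = (i, i², …, i²)` (`i < m`) lie on a parabola. To cut out a subset, in which `S_i` is the set
of selected `j` for a given `i`, take the `D` far vertices `M e_j` and, for each `i`, an apex `w_i`
proportional to `c_i - ∑_{j ∈ S_i} e_j`. For `j ∈ S_i`, the point `c_i - e_j` is the convex
combination `λ w_i + ∑_{n ∈ S_i \ {j}} M⁻¹ (M e_n)` with `λ = 1 - (|S_i| - 1) / M`; this fixes the
scaling of `w_i`. For `j ∉ S_i`, the linear functional `x ↦ 2 i x₀ - x_j`, tangent to the parabola
at `c_i`, is larger at `c_i - e_j` than at any of the `k` vertices, once `M` is large. Finally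
`3 m D ≥ (D + 1)(m + D)` as soon as `k ≥ 2d`.
-/

open Finset

theorem Fin.range_append {α : Type*} {m n : ℕ} (a : Fin m → α) (b : Fin n → α) :
    Set.range (Fin.append a b) = Set.range a ∪ Set.range b := by
  ext x
  constructor
  · rintro ⟨t, rfl⟩
    induction t using Fin.addCases with
    | left t => exact Or.inl ⟨t, (Fin.append_left a b t).symm⟩
    | right t => exact Or.inr ⟨t, (Fin.append_right a b t).symm⟩
  · rintro (⟨t, rfl⟩ | ⟨t, rfl⟩)
    exacts [⟨Fin.castAdd n t, Fin.append_left a b t⟩, ⟨Fin.natAdd m t, Fin.append_right a b t⟩]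

section Convex
variable {E ι : Type*} [AddCommGroup E] [Module ℝ E]

theorem notMem_convexHull_of_forall_lt (f : E →ₗ[ℝ] ℝ) {s : Set E} {x : E}
    (h : ∀ y ∈ s, f y < f x) : x ∉ convexHull ℝ s := fun hx =>
  lt_irrefl (f x) (convexHull_min h (convex_halfSpace_lt f.isLinear (f x)) hx)

theorem smul_add_sum_mem_convexHull (w : E) (g : ι → E) (T : Finset ι) {M : ℝ} (hM : 0 < M)
    (hT : (#T : ℝ) ≤ M) :
    (1 - #T / M) • w + ∑ n ∈ T, g n ∈ convexHull ℝ (insert w (Set.range (fun n => M • g n))) := by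
  have key := (convex_convexHull ℝ (insert w (Set.range (fun n => M • g n)))).sum_mem
    (t := insertNone T) (w := fun o => o.elim (1 - #T / M) fun _ => M⁻¹)
    (z := fun o => o.elim w fun n => M • g n) ?_ ?_ ?_
  · simpa [sum_insertNone, smul_smul, hM.ne'] using key
  · rintro (_ | n) -
    · simpa [sub_nonneg, div_le_one hM] using hT
    · simpa using hM.le
  · simp [sum_insertNone, div_eq_mul_inv]
  · rintro (_ | n) -
    · exact subset_convexHull ℝ _ (Set.mem_insert _ _)
    · exact subset_convexHull ℝ _ (Set.mem_insert_of_mem _ ⟨n, rfl⟩)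

end Convex

theorem exists_inter_image_eq_of_forall_preimage_eq {α ι : Type*} [Fintype ι] [DecidableEq α]
    {C : Set (Set α)} (g : ι → α) (hg : ∀ T : Set ι, ∃ P ∈ C, g ⁻¹' P = T) {B : Finset α}
    (hB : B ⊆ univ.image g) : ∃ P ∈ C, P ∩ ↑(univ.image g) = (B : Set α) := by
  obtain ⟨P, hPC, hP⟩ := hg (g ⁻¹' B)
  refine ⟨P, hPC, ?_⟩
  rw [coe_image, coe_univ, Set.image_univ, ← Set.image_preimage_eq_inter_range, hP,
    Set.image_preimage_eq_inter_range, Set.inter_eq_left]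
  exact fun x hx => by simpa using hB hx

theorem one_le_sq_natCast_sub {a b : ℕ} (h : a ≠ b) : 1 ≤ ((a : ℝ) - b) ^ 2 := by
  rcases h.lt_or_gt with h | h
  · have : (a : ℝ) + 1 ≤ b := by exact_mod_cast h
    nlinarith
  · have : (b : ℝ) + 1 ≤ a := by exact_mod_cast h
    nlinarith

noncomputable section Construction

variable {D m : ℕ}

def parabolaPoint (D : ℕ) (t : ℝ) : Fin (D + 1) → ℝ := Fin.cons t fun _ => t ^ 2

def gridPoint (D : ℕ) (t : ℝ) (j : Fin D) : Fin (D + 1) → ℝ :=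
  parabolaPoint D t - Pi.single j.succ 1

def apexScale (M : ℝ) (S : Finset (Fin D)) : ℝ := 1 - ((#S : ℝ) - 1) / M

def apex (M t : ℝ) (S : Finset (Fin D)) : Fin (D + 1) → ℝ :=
  (apexScale M S)⁻¹ • (parabolaPoint D t - ∑ j ∈ S, Pi.single j.succ 1)

def selectionVertices (M : ℝ) (S : Fin m → Finset (Fin D)) : Fin (m + D) → Fin (D + 1) → ℝ :=
  Fin.append (fun i => apex M (i : ℕ) (S i)) fun n => M • Pi.single n.succ 1

def tangentFunctional (D : ℕ) (s : ℝ) (j : Fin D) : (Fin (D + 1) → ℝ) →ₗ[ℝ] ℝ :=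
  (2 * s) • LinearMap.proj 0 - LinearMap.proj j.succ

theorem gridPoint_inj {s s' : ℝ} {j j' : Fin D} :
    gridPoint D s j = gridPoint D s' j' ↔ s = s' ∧ j = j' := by
  refine ⟨fun h => ?_, fun h => by rw [h.1, h.2]⟩
  have h0 := congrFun h 0
  have hj := congrFun h j.succ
  simp [gridPoint, parabolaPoint] at h0 hj
  subst h0
  simpa [Pi.single_apply, eq_comm] using hj

theorem tangentFunctional_parabolaPoint (s t : ℝ) (j : Fin D) :
    tangentFunctional D s j (parabolaPoint D t) = s ^ 2 - (s - t) ^ 2 := by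
  simp [tangentFunctional, parabolaPoint]; ring

theorem tangentFunctional_single (s : ℝ) (j n : Fin D) :
    tangentFunctional D s j (Pi.single n.succ 1) = -if j = n then 1 else 0 := by
  simp [tangentFunctional, Pi.single_apply]

theorem tangentFunctional_gridPoint (s : ℝ) (j : Fin D) :
    tangentFunctional D s j (gridPoint D s j) = s ^ 2 + 1 := by
  simp [gridPoint, tangentFunctional_parabolaPoint, tangentFunctional_single]

theorem tangentFunctional_apex (s M t : ℝ) (j : Fin D) (S : Finset (Fin D)) :
    tangentFunctional D s j (apex M t S) =
      (apexScale M S)⁻¹ * (s ^ 2 - (s - t) ^ 2 + if j ∈ S then 1 else 0) := by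
  simp [apex, tangentFunctional_parabolaPoint, tangentFunctional_single, sub_eq_add_neg]
  split_ifs <;> ring

theorem apexScale_pos {M : ℝ} {S : Finset (Fin D)} (hM : (D : ℝ) < M) : 0 < apexScale M S := by
  have hS : (#S : ℝ) ≤ D := by exact_mod_cast (card_le_univ S).trans_eq (Fintype.card_fin D)
  have hM0 : 0 < M := lt_of_le_of_lt D.cast_nonneg hM
  rw [apexScale, sub_pos, div_lt_one hM0]
  linarith

theorem gridPoint_mem_convexHull {M : ℝ} (hM : (D : ℝ) < M) (S : Fin m → Finset (Fin D))
    {i : Fin m} {j : Fin D} (hj : j ∈ S i) :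
    gridPoint D i j ∈ convexHull ℝ (Set.range (selectionVertices M S)) := by
  set T := (S i).erase j
  have hT : (#T : ℝ) ≤ M := by
    have : #T ≤ D := (card_le_univ T).trans_eq (Fintype.card_fin D)
    exact (Nat.cast_le.2 this).trans hM.le
  have hscale : apexScale M (S i) = 1 - #T / M := by
    rw [apexScale, cast_card_erase_of_mem hj]
  have hdecomp : gridPoint D i j = (1 - #T / M) • apex M i (S i) + ∑ n ∈ T, Pi.single n.succ 1 := by
    rw [← hscale, apex, smul_inv_smul₀ (apexScale_pos hM).ne', gridPoint, ← add_sum_erase _ _ hj]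
    abel
  rw [hdecomp]
  refine convexHull_mono ?_
    (smul_add_sum_mem_convexHull _ _ _ (lt_of_le_of_lt D.cast_nonneg hM) hT)
  rw [selectionVertices, Fin.range_append]
  rintro _ (rfl | ⟨n, rfl⟩)
  exacts [Or.inl ⟨i, rfl⟩, Or.inr ⟨n, rfl⟩]

theorem inv_apexScale_mul_lt {M c x : ℝ} {S : Finset (Fin D)} (hM : 0 < M) (hc : 0 ≤ c)
    (hx : x ≤ c) (hcM : (c + 1) * ((#S : ℝ) - 1) < M) : (apexScale M S)⁻¹ * x < c + 1 := by
  have hscale : c < (c + 1) * apexScale M S := by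
    have : (c + 1) * ((#S : ℝ) - 1) / M < 1 := (div_lt_one hM).2 hcM
    rw [apexScale, mul_sub, mul_one, mul_div_assoc']
    linarith
  have hpos : 0 < apexScale M S := pos_of_mul_pos_right (hc.trans_lt hscale) (by linarith)
  rw [inv_mul_lt_iff₀ hpos]
  linarith

theorem gridPoint_notMem_convexHull {M : ℝ} (hM : ((m : ℝ) ^ 2 + 1) * D < M)
    (S : Fin m → Finset (Fin D)) {i : Fin m} {j : Fin D} (hj : j ∉ S i) :
    gridPoint D i j ∉ convexHull ℝ (Set.range (selectionVertices M S)) := by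
  have hM0 : 0 < M := lt_of_le_of_lt (by positivity) hM
  refine notMem_convexHull_of_forall_lt (tangentFunctional D i j) ?_
  rw [tangentFunctional_gridPoint, selectionVertices, Fin.range_append]
  rintro _ (⟨i', rfl⟩ | ⟨n, rfl⟩)
  · have hnum : (i : ℝ) ^ 2 - (i - i') ^ 2 + (if j ∈ S i' then 1 else 0) ≤ i ^ 2 := by
      obtain rfl | hne := eq_or_ne i' i
      · simp [hj]
      · have := one_le_sq_natCast_sub (Fin.val_injective.ne hne.symm)
        split_ifs <;> linarith
    have hS : (#(S i') : ℝ) ≤ D := by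
      exact_mod_cast (card_le_univ _).trans_eq (Fintype.card_fin D)
    have him : (i : ℝ) ≤ m := by exact_mod_cast i.isLt.le
    rw [tangentFunctional_apex]
    refine inv_apexScale_mul_lt hM0 (sq_nonneg _) hnum ?_
    calc ((i : ℝ) ^ 2 + 1) * (#(S i') - 1) ≤ ((i : ℝ) ^ 2 + 1) * D := by gcongr; linarith
      _ ≤ ((m : ℝ) ^ 2 + 1) * D := by gcongr
      _ < M := hM
  · rw [map_smul, tangentFunctional_single, smul_eq_mul]
    split_ifs <;> nlinarith [sq_nonneg (i : ℝ)]

theorem exists_mem_kVertexPolytopes_preimage_eq (T : Set (Fin m × Fin D)) :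
    ∃ P ∈ KVertexPolytopes (D + 1) (m + D),
      (fun p : Fin m × Fin D => gridPoint D p.1 p.2) ⁻¹' P = T := by
  classical
  set M : ℝ := ((m : ℝ) ^ 2 + 1) * D + 1
  have hM : ((m : ℝ) ^ 2 + 1) * D < M := lt_add_one _
  refine ⟨_, ⟨selectionVertices M fun i => {j | (i, j) ∈ T}, rfl⟩, ?_⟩
  ext ⟨i, j⟩
  by_cases h : (i, j) ∈ T
  · simp only [Set.mem_preimage, h, iff_true]
    exact gridPoint_mem_convexHull (by nlinarith) _ (by simpa using h)
  · simp only [Set.mem_preimage, h, iff_false]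
    exact gridPoint_notMem_convexHull hM _ (by simpa using h)

end Construction

/-- Lower bound: for `d ≥ 2` and `k ≥ 2d`, the VC-dimension of `k`-vertex polytopes in
`ℝ^d` is at least `d·k/3`: there is a shattered finite set `A` with `3·|A| ≥ d·k`. -/
theorem kvertex_polytopes_vc_lower (d k : ℕ) (hd : 2 ≤ d) (hk : 2 * d ≤ k) :
    ∃ A : Finset (Fin d → ℝ),
      d * k ≤ 3 * A.card ∧
      ∀ B : Finset (Fin d → ℝ), B ⊆ A →
        ∃ S ∈ KVertexPolytopes d k, S ∩ (A : Set (Fin d → ℝ)) = (B : Set (Fin d → ℝ)) := by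
  classical
  obtain ⟨D, rfl⟩ : ∃ D, d = D + 1 := ⟨d - 1, by omega⟩
  obtain ⟨m, rfl⟩ : ∃ m, k = m + D := ⟨k - D, by omega⟩
  have hinj : Function.Injective fun p : Fin m × Fin D => gridPoint D p.1 p.2 := by
    rintro ⟨i, j⟩ ⟨i', j'⟩ h
    obtain ⟨hi, rfl⟩ := gridPoint_inj.1 h
    exact Prod.ext (Fin.ext (by exact_mod_cast hi)) rfl
  refine ⟨univ.image _, ?_, fun B hB =>
    exists_inter_image_eq_of_forall_preimage_eq _ exists_mem_kVertexPolytopes_preimage_eq hB⟩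
  rw [card_image_of_injective _ hinj, card_univ, Fintype.card_prod, Fintype.card_fin,
    Fintype.card_fin]
  nlinarith
end
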